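/- arXiv:2303.00241 — 3 statements merged into one kernel-verified Lean document; each statement's English description precedes it below -/
import Mathlib

section
/- Let $\lambda \in \mathbb{Z}^n$ with weakly increasing rearrangement $\lambda_-$ and let $v = v(\lambda) \in S_n$ be the minimal-length permutation with $v(\lambda) = \lambda_-$. Then the map $\alpha \mapsto -v(\alpha)$ is a bijection between the set $\{\alpha > 0 : \langle\lambda,\alpha^\vee\rangle > 0 \text{ and } \langle\rho, v(\alpha)^\vee\rangle = -1\}$ and the set of simple roots $\{\alpha_j : v^{-1}(\alpha_j) < 0\}$; moreover for corresponding $\alpha$ and $\alpha_j = -v(\alpha)$ one has $\langle\lambda, \alpha^\vee\rangle = -\langle\lambda_-, \alpha_j^\vee\rangle$. -/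
/-- Key strictness lemma: if `v` sorts `lam` with minimal inversion number, and `b = a+1`
with `v.symm b < v.symm a`, then the sorted values at `a` and `b` are strictly ordered. -/
lemma stmt4_strict (n : ℕ) (lam : Fin n → ℤ) (v : Equiv.Perm (Fin n))
    (hsort : ∀ i j : Fin n, i ≤ j → lam (v.symm i) ≤ lam (v.symm j))
    (hmin : ∀ w : Equiv.Perm (Fin n),
      (∀ i j : Fin n, i ≤ j → lam (w.symm i) ≤ lam (w.symm j)) →
      (Finset.univ.filter (fun p : Fin n × Fin n => p.1 < p.2 ∧ v p.2 < v p.1)).card ≤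
        (Finset.univ.filter (fun p : Fin n × Fin n => p.1 < p.2 ∧ w p.2 < w p.1)).card)
    (a b : Fin n) (hab : (b : ℕ) = (a : ℕ) + 1) (hba : v.symm b < v.symm a) :
    lam (v.symm a) < lam (v.symm b) := by
  have hle : lam (v.symm a) ≤ lam (v.symm b) := hsort a b (by rw [Fin.le_def]; omega)
  by_contra hcon
  push_neg at hcon
  have heq : lam (v.symm a) = lam (v.symm b) := le_antisymm hle hcon
  -- values of the swap, on the level of `ℕ`
  have sval : ∀ z : Fin n, ((Equiv.swap a b z : Fin n) : ℕ)
      = if (z : ℕ) = (a : ℕ) then (b : ℕ) else if (z : ℕ) = (b : ℕ) then (a : ℕ) else (z : ℕ) := by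
    intro z
    rcases eq_or_ne z a with rfl | hza
    · rw [Equiv.swap_apply_left, if_pos rfl]
    · rcases eq_or_ne z b with rfl | hzb
      · rw [Equiv.swap_apply_right, if_neg (by omega), if_pos rfl]
      · rw [Equiv.swap_apply_of_ne_of_ne hza hzb,
          if_neg (fun h => hza (Fin.ext h)), if_neg (fun h => hzb (Fin.ext h))]
  have aux : ∀ x y : Fin n, ¬(x = b ∧ y = a) →
      (Equiv.swap a b x < Equiv.swap a b y ↔ (x < y ∧ ¬(x = a ∧ y = b))) := by
    intro x y h
    rw [Fin.lt_def, Fin.lt_def, sval, sval]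
    have h' : ¬((x : ℕ) = (b : ℕ) ∧ (y : ℕ) = (a : ℕ)) :=
      fun hh => h ⟨Fin.ext hh.1, Fin.ext hh.2⟩
    have hiff : (x = a ∧ y = b) ↔ ((x : ℕ) = (a : ℕ) ∧ (y : ℕ) = (b : ℕ)) := by
      simp [Fin.ext_iff]
    rw [hiff]
    split_ifs <;> omega
  set w : Equiv.Perm (Fin n) := v.trans (Equiv.swap a b) with hw
  have hwsymm : ∀ i : Fin n, w.symm i = v.symm (Equiv.swap a b i) := by
    intro i
    simp [hw, Equiv.symm_trans_apply, Equiv.symm_swap]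
  have hval : ∀ i : Fin n, lam (v.symm (Equiv.swap a b i)) = lam (v.symm i) := by
    intro i
    rcases eq_or_ne i a with rfl | h1
    · rw [Equiv.swap_apply_left]; exact heq.symm
    · rcases eq_or_ne i b with rfl | h2
      · rw [Equiv.swap_apply_right]; exact heq
      · rw [Equiv.swap_apply_of_ne_of_ne h1 h2]
  have hwsort : ∀ i j : Fin n, i ≤ j → lam (w.symm i) ≤ lam (w.symm j) := by
    intro i j hij
    rw [hwsymm, hwsymm, hval, hval]
    exact hsort i j hij
  have hfe : Finset.univ.filter (fun p : Fin n × Fin n => p.1 < p.2 ∧ w p.2 < w p.1)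
      = (Finset.univ.filter (fun p : Fin n × Fin n => p.1 < p.2 ∧ v p.2 < v p.1)).erase
          (v.symm b, v.symm a) := by
    ext p
    simp only [Finset.mem_filter, Finset.mem_univ, true_and, Finset.mem_erase]
    have hwap : ∀ z : Fin n, w z = Equiv.swap a b (v z) := fun z => rfl
    constructor
    · rintro ⟨h1, h2⟩
      rw [hwap, hwap] at h2
      have hns : ¬(v p.2 = b ∧ v p.1 = a) := by
        rintro ⟨hx, hy⟩
        have e1 : p.1 = v.symm a := by rw [← hy, Equiv.symm_apply_apply]
        have e2 : p.2 = v.symm b := by rw [← hx, Equiv.symm_apply_apply]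
        rw [e1, e2] at h1
        exact absurd hba (not_lt.mpr h1.le)
      have h3 := (aux _ _ hns).mp h2
      refine ⟨?_, h1, h3.1⟩
      intro hp
      apply h3.2
      rw [hp]
      exact ⟨v.apply_symm_apply a, v.apply_symm_apply b⟩
    · rintro ⟨hne, h1, h2⟩
      refine ⟨h1, ?_⟩
      rw [hwap, hwap]
      have hns : ¬(v p.2 = b ∧ v p.1 = a) := by
        rintro ⟨hx, hy⟩
        rw [hx, hy, Fin.lt_def] at h2
        omega
      refine (aux _ _ hns).mpr ⟨h2, ?_⟩
      rintro ⟨hx, hy⟩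
      apply hne
      have e1 : p.1 = v.symm b := by rw [← hy, Equiv.symm_apply_apply]
      have e2 : p.2 = v.symm a := by rw [← hx, Equiv.symm_apply_apply]
      exact Prod.ext e1 e2
  have hPm : (v.symm b, v.symm a) ∈
      Finset.univ.filter (fun p : Fin n × Fin n => p.1 < p.2 ∧ v p.2 < v p.1) := by
    simp only [Finset.mem_filter, Finset.mem_univ, true_and]
    refine ⟨hba, ?_⟩
    rw [v.apply_symm_apply, v.apply_symm_apply, Fin.lt_def]
    omega
  have hcard := hmin w hwsort
  rw [hfe] at hcard
  have hlt := Finset.card_erase_lt_of_mem hPm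
  omega

/-- Type `A_{n-1}` combinatorics: with `λ₋ = k ↦ lam (v.symm k)` the weakly increasing
rearrangement of `lam` and `v` the minimal-length sorting permutation, the map
`α = ε_{p.1} - ε_{p.2} ↦ -v(α)` (encoded `p ↦ (v p.2, v p.1)`) is a bijection from
`{α > 0 : ⟨λ,α^∨⟩ > 0, ⟨ρ, v(α)^∨⟩ = -1}` onto the set of simple roots `α_j` with
`v⁻¹ α_j < 0`; moreover corresponding pairing values satisfy
`⟨λ, α^∨⟩ = -⟨λ₋, α_j^∨⟩`. -/
theorem stmt4 (n : ℕ) (lam : Fin n → ℤ) (v : Equiv.Perm (Fin n))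
    (hsort : ∀ i j : Fin n, i ≤ j → lam (v.symm i) ≤ lam (v.symm j))
    (hmin : ∀ w : Equiv.Perm (Fin n),
      (∀ i j : Fin n, i ≤ j → lam (w.symm i) ≤ lam (w.symm j)) →
      (Finset.univ.filter (fun p : Fin n × Fin n => p.1 < p.2 ∧ v p.2 < v p.1)).card ≤
        (Finset.univ.filter (fun p : Fin n × Fin n => p.1 < p.2 ∧ w p.2 < w p.1)).card) :
    Set.BijOn (fun p : Fin n × Fin n => (v p.2, v p.1))
      {p : Fin n × Fin n | p.1 < p.2 ∧ lam p.2 < lam p.1 ∧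
        ((v p.2 : ℤ) - (v p.1 : ℤ) = -1)}
      {p : Fin n × Fin n | ((p.2 : ℕ) = (p.1 : ℕ) + 1) ∧ v.symm p.2 < v.symm p.1} ∧
    ∀ p : Fin n × Fin n, p.1 < p.2 → lam p.2 < lam p.1 →
      ((v p.2 : ℤ) - (v p.1 : ℤ) = -1) →
      lam p.1 - lam p.2 = -((fun k => lam (v.symm k)) (v p.2) - (fun k => lam (v.symm k)) (v p.1)) := by
  constructor
  · refine ⟨?_, ?_, ?_⟩
    · rintro ⟨i, j⟩ ⟨hij, _, hv⟩
      refine ⟨?_, ?_⟩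
      · simp only at hv ⊢
        omega
      · simpa using hij
    · rintro ⟨i, j⟩ _ ⟨i', j'⟩ _ h
      simp only [Prod.mk.injEq] at h
      exact Prod.ext (v.injective h.2) (v.injective h.1)
    · rintro ⟨a, b⟩ ⟨hab, hba⟩
      simp only [Set.mem_setOf_eq] at hab hba
      refine ⟨(v.symm b, v.symm a), ⟨hba, stmt4_strict n lam v hsort hmin a b hab hba, ?_⟩, ?_⟩
      · simp only [v.apply_symm_apply]
        omega
      · simp only [v.apply_symm_apply]
  · intro p _ _ _
    simp only [Equiv.symm_apply_apply]
    ring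
end

section
/- Let $R = \Bbbk[u_{ij}^{(k)} : 1 \le i,j \le n, k \ge 0]$ be a polynomial ring over a field $\Bbbk$, and define $f^{(k)} \in R$ by the expansion $\prod_{i=1}^n \left(\sum_{k\ge 0} u_{ii}^{(k)} s^k\right) - 1 = \sum_{k\ge 0} f^{(k)} s^k$ in $R[[s]]$. Then the sequence $f^{(0)}, f^{(1)}, f^{(2)}, \dots$ is a regular sequence in $R$. -/
/-!
Fix an index `ℓ` and let `c = ∏_{i ≠ ℓ} u_{ii}^{(0)}`. Over `R[c⁻¹]` the product `P` of the
diagonal series `U_i = ∑_m u_{ii}^{(m)} s^m` with `i ≠ ℓ` is a unit, and `f^{(0)}, …, f^{(k-1)}`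
vanish exactly when `U_ℓ ≡ P⁻¹ mod s^k`. Hence modulo these relations the variables
`u_{ℓℓ}^{(m)}`, `m < k`, are determined by the others, and the quotient is realised by the
substitution `ψ : R → R[c⁻¹]` sending `u_{ℓℓ}^{(m)}` to the `m`-th coefficient of `P⁻¹`. Its target
is a domain, and `ψ f^{(k)} = c · (u_{ℓℓ}^{(k)} - [s^k] P⁻¹) ≠ 0`. Nothing is lost in passing from
`R[c⁻¹]` back to `R`, because `f^{(0)} = c · u_{ℓℓ}^{(0)} - 1` makes `c` a unit modulo the ideal.
-/

open MvPolynomial Finset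

theorem PowerSeries.coeff_prod_eq_sum_antidiagonalTuple {R : Type*} [CommSemiring R] {n : ℕ}
    (F : Fin n → PowerSeries R) (k : ℕ) :
    coeff k (∏ i, F i) = ∑ d ∈ Nat.antidiagonalTuple n k, ∏ i, coeff (d i) (F i) := by
  rw [coeff_prod]
  refine sum_nbij' (fun l => (l : Fin n → ℕ)) (fun d => Finsupp.equivFunOnFinite.symm d)
    ?_ ?_ (fun l _ => Finsupp.equivFunOnFinite.symm_apply_apply l) (fun _ _ => rfl)
    (fun _ _ => rfl)
  · intro l hl
    rw [mem_finsuppAntidiag] at hl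
    simpa [Nat.mem_antidiagonalTuple] using hl.1
  · intro d hd
    rw [Nat.mem_antidiagonalTuple] at hd
    simpa [mem_finsuppAntidiag] using hd

theorem Ideal.mem_of_mul_mem_of_ringHom {R S : Type*} [CommRing R] [CommRing S] [IsDomain S]
    {I : Ideal R} {f a : R} (φ ψ : R →+* S) (hψI : I ≤ RingHom.ker ψ) (hψf : ψ f ≠ 0)
    (hφψ : ∀ r, φ r - ψ r ∈ I.map φ) (hI : (I.map φ).comap φ = I) (h : f * a ∈ I) : a ∈ I := by
  have hψa : ψ a = 0 :=
    (mul_eq_zero.mp (by rw [← map_mul]; exact hψI h)).resolve_left hψf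
  rw [← hI, Ideal.mem_comap]
  simpa [hψa] using hφψ a

theorem IsLocalization.Away.comap_map_eq_of_mul_mem {R S : Type*} [CommRing R] [CommRing S]
    [Algebra R S] {c : R} [IsLocalization.Away c S] {I : Ideal R}
    (hI : ∀ a, c * a ∈ I → a ∈ I) : (I.map (algebraMap R S)).comap (algebraMap R S) = I := by
  refine le_antisymm (fun a ha => ?_) Ideal.le_comap_map
  obtain ⟨_, ⟨j, rfl⟩, hj⟩ :=
    (IsLocalization.algebraMap_mem_map_algebraMap_iff (Submonoid.powers c) (S := S) I a).mp ha
  induction j with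
  | zero => simpa using hj
  | succ j ih => exact ih (hI _ (by simpa only [pow_succ', mul_assoc] using hj))

namespace DiagonalProduct

variable {K : Type*} [CommRing K] {n : ℕ}

variable (K) in
noncomputable def diagSeries (i : Fin n) : PowerSeries (MvPolynomial (Fin n × Fin n × ℕ) K) :=
  PowerSeries.mk fun m => X (i, i, m)

variable (K n) in
noncomputable def diagProdCoeff (k : ℕ) : MvPolynomial (Fin n × Fin n × ℕ) K :=
  (∑ c ∈ Nat.antidiagonalTuple n k, ∏ i : Fin n, X (i, i, c i)) - (if k = 0 then 1 else 0)

variable (K n) in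
noncomputable def diagProdIdeal (k : ℕ) : Ideal (MvPolynomial (Fin n × Fin n × ℕ) K) :=
  Ideal.span (diagProdCoeff K n '' {j | j < k})

variable (K) in
noncomputable def diagZeroProdErase (ℓ : Fin n) : MvPolynomial (Fin n × Fin n × ℕ) K :=
  ∏ i ∈ univ.erase ℓ, X (i, i, 0)

section Maps

variable {T : Type*} [CommRing T] (W : MvPolynomial (Fin n × Fin n × ℕ) K →+* T)

theorem map_diagProdCoeff (k : ℕ) :
    W (diagProdCoeff K n k) = PowerSeries.coeff k (∏ i, (diagSeries K i).map W - 1) := by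
  rw [map_sub, PowerSeries.coeff_one, PowerSeries.coeff_prod_eq_sum_antidiagonalTuple]
  simp [diagProdCoeff, diagSeries, apply_ite W]

theorem diagProdIdeal_le_ker_iff (k : ℕ) :
    diagProdIdeal K n k ≤ RingHom.ker W ↔
      PowerSeries.X ^ k ∣ ∏ i, (diagSeries K i).map W - 1 := by
  simp [diagProdIdeal, Ideal.span_le, Set.subset_def,
    PowerSeries.X_pow_dvd_iff, map_diagProdCoeff]

theorem constantCoeff_prod_erase_map_diagSeries (ℓ : Fin n) :
    PowerSeries.constantCoeff (∏ i ∈ univ.erase ℓ, (diagSeries K i).map W) =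
      W (diagZeroProdErase K ℓ) := by
  simp [diagZeroProdErase, diagSeries, map_prod, ← PowerSeries.coeff_zero_eq_constantCoeff_apply]

theorem ringHom_ext_of_diagProdIdeal_le_ker {ℓ : Fin n} {k : ℕ}
    {W₁ W₂ : MvPolynomial (Fin n × Fin n × ℕ) K →+* T}
    (h₁ : diagProdIdeal K n k ≤ RingHom.ker W₁) (h₂ : diagProdIdeal K n k ≤ RingHom.ker W₂)
    (hc : IsUnit (W₁ (diagZeroProdErase K ℓ))) (hC : ∀ r, W₁ (C r) = W₂ (C r))
    (hX : ∀ s, ¬ (s.1 = ℓ ∧ s.2.1 = ℓ ∧ s.2.2 < k) → W₁ (X s) = W₂ (X s)) : W₁ = W₂ := by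
  refine MvPolynomial.ringHom_ext hC fun s => ?_
  by_cases hs : s.1 = ℓ ∧ s.2.1 = ℓ ∧ s.2.2 < k
  swap
  · exact hX s hs
  obtain ⟨i, j, m⟩ := s
  obtain ⟨rfl, rfl, hm⟩ : ℓ = i ∧ ℓ = j ∧ m < k := ⟨hs.1.symm, hs.2.1.symm, hs.2.2⟩
  have hrest : ∏ i ∈ univ.erase ℓ, (diagSeries K i).map W₂ =
      ∏ i ∈ univ.erase ℓ, (diagSeries K i).map W₁ := by
    refine prod_congr rfl fun i hi => PowerSeries.ext fun d => ?_
    simpa [diagSeries] using (hX (i, i, d) (by simp [(mem_erase.mp hi).1])).symm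
  have hunit : IsUnit (∏ i ∈ univ.erase ℓ, (diagSeries K i).map W₁) := by
    rwa [PowerSeries.isUnit_iff_constantCoeff, constantCoeff_prod_erase_map_diagSeries]
  rw [diagProdIdeal_le_ker_iff, ← mul_prod_erase _ _ (mem_univ ℓ)] at h₁ h₂
  rw [hrest] at h₂
  have hdvd : PowerSeries.X ^ k ∣ (diagSeries K ℓ).map W₁ - (diagSeries K ℓ).map W₂ := by
    rw [← hunit.dvd_mul_right]
    convert dvd_sub h₁ h₂ using 1
    ring
  simpa [diagSeries, sub_eq_zero] using PowerSeries.X_pow_dvd_iff.mp hdvd m hm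

end Maps

section Subst

variable {T : Type*} [CommRing T] (φ : MvPolynomial (Fin n × Fin n × ℕ) K →+* T)
  (B : PowerSeries T) (ℓ : Fin n) (k : ℕ)

noncomputable def substDiag : MvPolynomial (Fin n × Fin n × ℕ) K →+* T :=
  eval₂Hom (φ.comp C) fun s =>
    if s.1 = ℓ ∧ s.2.1 = ℓ ∧ s.2.2 < k then PowerSeries.coeff s.2.2 B else φ (X s)

theorem substDiag_C (r : K) : substDiag φ B ℓ k (C r) = φ (C r) :=
  eval₂Hom_C _ _ _

theorem substDiag_X_of_not {s : Fin n × Fin n × ℕ} (hs : ¬ (s.1 = ℓ ∧ s.2.1 = ℓ ∧ s.2.2 < k)) :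
    substDiag φ B ℓ k (X s) = φ (X s) := by
  simp [substDiag, hs]

theorem map_substDiag_diagSeries_sub :
    (diagSeries K ℓ).map (substDiag φ B ℓ k) - B =
      PowerSeries.X ^ k *
        PowerSeries.mk fun m => φ (X (ℓ, ℓ, m + k)) - PowerSeries.coeff (m + k) B := by
  ext m
  rw [PowerSeries.coeff_X_pow_mul']
  split_ifs with hkm
  · simp [substDiag, diagSeries, Nat.sub_add_cancel hkm, hkm.not_gt]
  · simp [substDiag, diagSeries, not_le.mp hkm]

variable {φ B}

theorem prod_map_substDiag_diagSeries_sub_one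
    (hB : (∏ i ∈ univ.erase ℓ, (diagSeries K i).map φ) * B = 1) :
    ∏ i, (diagSeries K i).map (substDiag φ B ℓ k) - 1 =
      PowerSeries.X ^ k * ((PowerSeries.mk fun m => φ (X (ℓ, ℓ, m + k)) -
        PowerSeries.coeff (m + k) B) * ∏ i ∈ univ.erase ℓ, (diagSeries K i).map φ) := by
  have hrest : ∏ i ∈ univ.erase ℓ, (diagSeries K i).map (substDiag φ B ℓ k) =
      ∏ i ∈ univ.erase ℓ, (diagSeries K i).map φ := by
    refine prod_congr rfl fun i hi => PowerSeries.ext fun m => ?_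
    simpa [diagSeries] using substDiag_X_of_not φ B ℓ k (s := (i, i, m))
      (by simp [(mem_erase.mp hi).1])
  rw [← mul_prod_erase _ _ (mem_univ ℓ), hrest, ← mul_assoc, ← map_substDiag_diagSeries_sub,
    ← hB]
  ring

theorem diagProdIdeal_le_ker_substDiag (hB : (∏ i ∈ univ.erase ℓ, (diagSeries K i).map φ) * B = 1) :
    diagProdIdeal K n k ≤ RingHom.ker (substDiag φ B ℓ k) := by
  rw [diagProdIdeal_le_ker_iff, prod_map_substDiag_diagSeries_sub_one ℓ k hB]
  exact dvd_mul_right _ _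

theorem substDiag_diagProdCoeff_self (hB : (∏ i ∈ univ.erase ℓ, (diagSeries K i).map φ) * B = 1) :
    substDiag φ B ℓ k (diagProdCoeff K n k) =
      (φ (X (ℓ, ℓ, k)) - PowerSeries.coeff k B) * φ (diagZeroProdErase K ℓ) := by
  rw [map_diagProdCoeff, prod_map_substDiag_diagSeries_sub_one ℓ k hB, PowerSeries.coeff_X_pow_mul',
    if_pos le_rfl, Nat.sub_self, PowerSeries.coeff_zero_eq_constantCoeff_apply, map_mul,
    constantCoeff_prod_erase_map_diagSeries]
  simp

end Subst

theorem diagZeroProdErase_ne_zero [IsDomain K] (ℓ : Fin n) : diagZeroProdErase K ℓ ≠ 0 :=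
  prod_ne_zero_iff.mpr fun _ _ => X_ne_zero _

theorem diagProdCoeff_zero (ℓ : Fin n) :
    diagProdCoeff K n 0 = X (ℓ, ℓ, 0) * diagZeroProdErase K ℓ - 1 := by
  simp [diagProdCoeff, diagZeroProdErase, Nat.antidiagonalTuple_zero_right,
    mul_prod_erase _ (fun i => X (i, i, 0)) (mem_univ ℓ)]

theorem mem_diagProdIdeal_of_diagZeroProdErase_mul_mem [IsDomain K] {ℓ : Fin n} {k : ℕ}
    {a : MvPolynomial (Fin n × Fin n × ℕ) K} (h : diagZeroProdErase K ℓ * a ∈ diagProdIdeal K n k) :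
    a ∈ diagProdIdeal K n k := by
  rcases Nat.eq_zero_or_pos k with rfl | hk
  · simpa [diagProdIdeal, diagZeroProdErase_ne_zero] using h
  · have hf₀ : diagProdCoeff K n 0 ∈ diagProdIdeal K n k := Ideal.subset_span ⟨0, hk, rfl⟩
    rw [diagProdCoeff_zero ℓ] at hf₀
    rw [show a = X (ℓ, ℓ, 0) * (diagZeroProdErase K ℓ * a) -
      (X (ℓ, ℓ, 0) * diagZeroProdErase K ℓ - 1) * a by ring]
    exact sub_mem (Ideal.mul_mem_left _ _ h) (Ideal.mul_mem_right _ _ hf₀)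

section Localization

variable [IsDomain K] (ℓ : Fin n)

theorem algebraMap_X_ne_coeff (k : ℕ)
    {B : PowerSeries (Localization.Away (diagZeroProdErase K ℓ))}
    (hB : (∏ i ∈ univ.erase ℓ, (diagSeries K i).map (algebraMap _ _)) * B = 1) :
    algebraMap (MvPolynomial (Fin n × Fin n × ℕ) K) _ (X (ℓ, ℓ, k)) ≠ PowerSeries.coeff k B := by
  -- `e₀` sends each `U_i` with `i ≠ ℓ`, hence also `B`, to `1`, but `u_{ℓℓ}^{(k)}` to `X`.
  set e₀ : MvPolynomial (Fin n × Fin n × ℕ) K →+* Polynomial K :=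
    eval₂Hom Polynomial.C fun s => if s.1 = ℓ then Polynomial.X else if s.2.2 = 0 then 1 else 0
  have he₀ : ∀ i ∈ univ.erase ℓ, (diagSeries K i).map e₀ = 1 := fun i hi => by
    ext m
    simp [diagSeries, e₀, (mem_erase.mp hi).1, PowerSeries.coeff_one]
  have hc : IsUnit (e₀ (diagZeroProdErase K ℓ)) := by
    simp [← constantCoeff_prod_erase_map_diagSeries, prod_eq_one he₀]
  set e := IsLocalization.Away.lift (S := Localization.Away (diagZeroProdErase K ℓ)) _ hc
  have he : e.comp (algebraMap _ _) = e₀ := IsLocalization.Away.lift_comp _ hc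
  have heB : B.map e = 1 := by
    have hmap : ∀ f : PowerSeries (MvPolynomial (Fin n × Fin n × ℕ) K),
        (f.map (algebraMap _ _)).map e = f.map e₀ := fun f => by
      rw [← he, PowerSeries.map_comp, RingHom.comp_apply]
    simpa [map_prod, hmap, prod_eq_one he₀] using congrArg (PowerSeries.map e) hB
  intro h
  have h' := congrArg e h
  rw [← RingHom.comp_apply, he, ← PowerSeries.coeff_map, heB] at h'
  exact Polynomial.X_ne_C (if k = 0 then (1 : K) else 0) <| by
    simpa [e₀, PowerSeries.coeff_one, apply_ite Polynomial.C] using h'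

theorem mem_diagProdIdeal_of_diagProdCoeff_mul_mem (hn : 0 < n) {k : ℕ}
    {a : MvPolynomial (Fin n × Fin n × ℕ) K} (h : diagProdCoeff K n k * a ∈ diagProdIdeal K n k) :
    a ∈ diagProdIdeal K n k := by
  let ℓ : Fin n := ⟨0, hn⟩
  let S := Localization.Away (diagZeroProdErase K ℓ)
  have : IsDomain S := Localization.Away.isDomain (diagZeroProdErase_ne_zero ℓ)
  let φ := algebraMap (MvPolynomial (Fin n × Fin n × ℕ) K) S
  have hc : IsUnit (φ (diagZeroProdErase K ℓ)) := IsLocalization.Away.algebraMap_isUnit _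
  obtain ⟨B, hB⟩ : ∃ B, (∏ i ∈ univ.erase ℓ, (diagSeries K i).map φ) * B = 1 :=
    (PowerSeries.isUnit_iff_constantCoeff.mpr
      (by rwa [constantCoeff_prod_erase_map_diagSeries])).exists_right_inv
  let ψ := substDiag φ B ℓ k
  let J := (diagProdIdeal K n k).map φ
  have hφψ : (Ideal.Quotient.mk J).comp φ = (Ideal.Quotient.mk J).comp ψ := by
    refine ringHom_ext_of_diagProdIdeal_le_ker (ℓ := ℓ) (k := k) ?_ ?_
      (hc.map (Ideal.Quotient.mk J))
      (fun r => by simp [ψ, substDiag_C]) (fun s hs => by simp [ψ, substDiag_X_of_not _ _ _ _ hs])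
    · rw [← RingHom.comap_ker, Ideal.mk_ker]
      exact Ideal.le_comap_map
    · rw [← RingHom.comap_ker]
      exact (diagProdIdeal_le_ker_substDiag ℓ k hB).trans (Ideal.ker_le_comap _)
  refine Ideal.mem_of_mul_mem_of_ringHom φ ψ (diagProdIdeal_le_ker_substDiag ℓ k hB) ?_
    (fun r => Ideal.Quotient.eq.mp (RingHom.congr_fun hφψ r))
    (IsLocalization.Away.comap_map_eq_of_mul_mem fun _ =>
      mem_diagProdIdeal_of_diagZeroProdErase_mul_mem (ℓ := ℓ)) h
  rw [substDiag_diagProdCoeff_self ℓ k hB]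
  exact mul_ne_zero (sub_ne_zero.mpr (algebraMap_X_ne_coeff ℓ k hB)) hc.ne_zero

end Localization

end DiagonalProduct

theorem stmt6_general (K : Type*) [Field K] (n : ℕ) (hn : 0 < n) :
    let R := MvPolynomial (Fin n × Fin n × ℕ) K
    let f : ℕ → R := fun k =>
      (∑ c ∈ Finset.Nat.antidiagonalTuple n k,
        ∏ i : Fin n, MvPolynomial.X (i, i, c i)) - (if k = 0 then 1 else 0)
    ∀ k : ℕ, ∀ x : R ⧸ Ideal.span (f '' {j | j < k}),
      Ideal.Quotient.mk (Ideal.span (f '' {j | j < k})) (f k) * x = 0 → x = 0 := by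
  intro R f k x hx
  obtain ⟨a, rfl⟩ := Ideal.Quotient.mk_surjective x
  rw [← map_mul, Ideal.Quotient.eq_zero_iff_mem] at hx
  exact Ideal.Quotient.eq_zero_iff_mem.mpr
    (DiagonalProduct.mem_diagProdIdeal_of_diagProdCoeff_mul_mem hn hx)

/-- Let `R = k[u_{ij}^{(k)}]` and let `f^{(k)}` be the coefficients of
`∏_{i=1}^n (∑_k u_{ii}^{(k)} s^k) - 1` as a series in `s`; explicitly
`f^{(k)} = ∑_{k₁+⋯+k_n = k} u_{11}^{(k₁)} ⋯ u_{nn}^{(k_n)} - δ_{k,0}`.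
Then `f^{(0)}, f^{(1)}, …` is a regular sequence in `R`: each `f^{(k)}` is a
non-zero-divisor modulo the ideal generated by the previous ones. -/
theorem stmt6 (K : Type*) [Field K] [CharZero K] (n : ℕ) (hn : 0 < n) :
    let R := MvPolynomial (Fin n × Fin n × ℕ) K
    let f : ℕ → R := fun k =>
      (∑ c ∈ Finset.Nat.antidiagonalTuple n k,
        ∏ i : Fin n, MvPolynomial.X (i, i, c i)) - (if k = 0 then 1 else 0)
    ∀ k : ℕ, ∀ x : R ⧸ Ideal.span (f '' {j | j < k}),
      Ideal.Quotient.mk (Ideal.span (f '' {j | j < k})) (f k) * x = 0 → x = 0 :=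
  stmt6_general K n hn
end

section
/- Let $\nu, \nu' \in (\mathbb{Z}_{\ge 0})^n_0$, let $(m_{i,j})_{i<j}$ and $(m'_{i,j})_{i<j}$ be nonnegative integers, and suppose $k, l \in \mathbb{Z}$ satisfy $\nu + \sum_{i<j} m_{i,j}\varepsilon_i + k\mathbf{1} = \nu' + \sum_{i<j} m'_{i,j}\varepsilon_i$ and $\nu + \sum_{i<j} m_{i,j}\varepsilon_j + l\mathbf{1} = \nu' + \sum_{i<j} m'_{i,j}\varepsilon_j$. Then $k = l$ and $\sum_{i<j} m_{i,j}(\varepsilon_i - \varepsilon_j) = \sum_{i<j} m'_{i,j}(\varepsilon_i - \varepsilon_j)$. -/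
/-- Key step in projecting the `gl_n` Cauchy kernel to the `sl_n` weight lattice:
if `ν + ∑ m_{ij} ε_i + k·𝟙 = ν' + ∑ m'_{ij} ε_i` and
`ν + ∑ m_{ij} ε_j + l·𝟙 = ν' + ∑ m'_{ij} ε_j` with `ν, ν'` nonnegative vectors each
having a zero coordinate, then `k = l` and
`∑ m_{ij} (ε_i - ε_j) = ∑ m'_{ij} (ε_i - ε_j)`. -/
theorem stmt10 (n : ℕ) (ν ν' : Fin n → ℕ) (hν : ∃ i, ν i = 0) (hν' : ∃ i, ν' i = 0)
    (m m' : {p : Fin n × Fin n // p.1 < p.2} → ℕ) (k l : ℤ)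
    (h1 : (fun i => (ν i : ℤ)) + (∑ p, (m p : ℤ) • (Pi.single p.1.1 (1 : ℤ) : Fin n → ℤ))
            + k • ((fun _ => 1 : Fin n → ℤ)) =
          (fun i => (ν' i : ℤ)) + ∑ p, (m' p : ℤ) • (Pi.single p.1.1 (1 : ℤ) : Fin n → ℤ))
    (h2 : (fun i => (ν i : ℤ)) + (∑ p, (m p : ℤ) • (Pi.single p.1.2 (1 : ℤ) : Fin n → ℤ))
            + l • ((fun _ => 1 : Fin n → ℤ)) =
          (fun i => (ν' i : ℤ)) + ∑ p, (m' p : ℤ) • (Pi.single p.1.2 (1 : ℤ) : Fin n → ℤ)) :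
    k = l ∧
      ∑ p, (m p : ℤ) • ((Pi.single p.1.1 (1 : ℤ) - Pi.single p.1.2 1 : Fin n → ℤ)) =
        ∑ p, (m' p : ℤ) • ((Pi.single p.1.1 (1 : ℤ) - Pi.single p.1.2 1 : Fin n → ℤ)) := by
  obtain ⟨i0, -⟩ := hν
  have hn : 0 < n := i0.pos
  have H1 := congrArg (fun f : Fin n → ℤ => ∑ x, f x) h1
  have H2 := congrArg (fun f : Fin n → ℤ => ∑ x, f x) h2
  simp only [Pi.add_apply, Finset.sum_add_distrib, Finset.sum_apply, Pi.smul_apply,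
    smul_eq_mul, Pi.single_apply, mul_ite, mul_one, mul_zero] at H1 H2
  rw [Finset.sum_comm] at H1 H2
  simp only [Finset.sum_comm (γ := Fin n), Finset.sum_ite_eq, Finset.sum_ite_eq',
    Finset.mem_univ, if_true, Finset.sum_const, Finset.card_univ, Fintype.card_fin,
    nsmul_eq_mul] at H1 H2
  have hne : (n:ℤ) ≠ 0 := by exact_mod_cast hn.ne'
  have hk : k = l := mul_left_cancel₀ hne (by linarith)
  subst hk
  refine ⟨rfl, ?_⟩
  simp only [smul_sub, Finset.sum_sub_distrib]
  linear_combination (norm := abel) h1 - h2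
end
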